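/- Surjectivity of the ideal of p-compact maps: Let 1 ≤ p < ∞, let Q : Z → X be a metric surjection between Banach spaces and T : X → Y a bounded linear map. If T ∘ Q : Z → Y is p-compact, then T is p-compact and κ_p(T) = κ_p(T ∘ Q). -/
import Mathlib


noncomputable section

open scoped ENNReal NNReal

/-- The conjugate exponent `p'` of `p : ℝ≥0∞`, characterized by `1/p + 1/p' = 1`
(with the conventions `1' = ∞` and `∞' = 1`). -/
def conjExp (p : ℝ≥0∞) : ℝ≥0∞ := (1 - 1/p)⁻¹

theorem one_le_conjExp (p : ℝ≥0∞) : 1 ≤ conjExp p := by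
  rw [conjExp]
  rw [ENNReal.one_le_inv]
  exact tsub_le_self

instance (p : ℝ≥0∞) : Fact (1 ≤ conjExp p) := ⟨one_le_conjExp p⟩

/-- The `ℓ_p`-norm `(∑ₙ ‖y n‖^p)^(1/p)` of a `p`-summable sequence `y`. -/
def lpNorm {X : Type*} [NormedAddCommGroup X] (p : ℝ≥0∞) (y : ℕ → X)
    (hy : Memℓp y p) : ℝ :=
  ‖(⟨y, hy⟩ : lp (fun _ : ℕ => X) p)‖

/-- The `p`-convex hull of a sequence `x` in `X`, taken with respect to the exponent `q`
(in the applications below, `q` is the conjugate exponent of `p`):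
the set of all sums `∑ₙ αₙ • xₙ` with `(αₙ) ∈ ℓ_q`, `‖(αₙ)‖_q ≤ 1`. -/
def pCo (𝕜 : Type*) [RCLike 𝕜] {X : Type*} [NormedAddCommGroup X] [NormedSpace 𝕜 X]
    (q : ℝ≥0∞) (x : ℕ → X) : Set X :=
  {v | ∃ α : lp (fun _ : ℕ => 𝕜) q, ‖α‖ ≤ 1 ∧ HasSum (fun n => α n • x n) v}

/-- A set `K ⊆ X` is relatively `p`-compact if it is contained in the `p`-convex hull of a
`p`-summable sequence of `X`. -/
def RelPCompact (𝕜 : Type*) [RCLike 𝕜] {X : Type*} [NormedAddCommGroup X]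
    [NormedSpace 𝕜 X] (p : ℝ≥0∞) (K : Set X) : Prop :=
  ∃ x : ℕ → X, Memℓp x p ∧ K ⊆ pCo 𝕜 (conjExp p) x

/-- A bounded linear map is `p`-compact if the image of the closed unit ball is contained in
the `p`-convex hull of a `p`-summable sequence of the target space. -/
def IsPCompact (𝕜 : Type*) [RCLike 𝕜] {X Y : Type*}
    [SeminormedAddCommGroup X] [NormedSpace 𝕜 X]
    [NormedAddCommGroup Y] [NormedSpace 𝕜 Y] (p : ℝ≥0∞) (T : X →L[𝕜] Y) : Prop :=
  ∃ y : ℕ → Y, Memℓp y p ∧ T '' Metric.closedBall 0 1 ⊆ pCo 𝕜 (conjExp p) y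

/-- The `p`-compact norm `κ_p(T) = inf { ‖(yₙ)‖_p : T(B_X) ⊆ p-co((yₙ)) }`. -/
def kappa (𝕜 : Type*) [RCLike 𝕜] {X Y : Type*}
    [SeminormedAddCommGroup X] [NormedSpace 𝕜 X]
    [NormedAddCommGroup Y] [NormedSpace 𝕜 Y] (p : ℝ≥0∞) (T : X →L[𝕜] Y) : ℝ :=
  sInf {c : ℝ | ∃ (y : ℕ → Y) (hy : Memℓp y p),
    T '' Metric.closedBall 0 1 ⊆ pCo 𝕜 (conjExp p) y ∧ c = lpNorm p y hy}

/-- `C` is an upper bound for the weak `ℓ_q`-norm of the sequence `(x'ₙ)` of functionals,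
i.e. `‖(x'ₙ(x))ₙ‖_q ≤ C‖x‖` for every `x` (equivalently,
`sup_{‖x‖ ≤ 1} ‖(x'ₙ(x))ₙ‖_q ≤ C`). -/
def WeakLpBound (𝕜 : Type*) [RCLike 𝕜] {X : Type*} [SeminormedAddCommGroup X]
    [NormedSpace 𝕜 X] (q : ℝ≥0∞) (x' : ℕ → (X →L[𝕜] 𝕜)) (C : ℝ) : Prop :=
  ∀ x : X, ∃ h : Memℓp (fun n => x' n x) q, lpNorm q (fun n => x' n x) h ≤ C * ‖x‖

/-- A bounded linear map `T : X → Y` is right `p`-nuclear if `T x = ∑ₙ x'ₙ(x) yₙ` for some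
weakly `p'`-summable sequence `(x'ₙ)` in `X'` and some `(yₙ)` with `∑ₙ ‖yₙ‖^p < ∞`. -/
def IsRightPNuclear (𝕜 : Type*) [RCLike 𝕜] {X Y : Type*}
    [SeminormedAddCommGroup X] [NormedSpace 𝕜 X]
    [NormedAddCommGroup Y] [NormedSpace 𝕜 Y] (p : ℝ≥0∞) (T : X →L[𝕜] Y) : Prop :=
  ∃ (x' : ℕ → (X →L[𝕜] 𝕜)) (y : ℕ → Y) (C : ℝ), 0 ≤ C ∧
    WeakLpBound 𝕜 (conjExp p) x' C ∧ Memℓp y p ∧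
    ∀ x : X, HasSum (fun n => x' n x • y n) (T x)

/-- The right `p`-nuclear norm
`ν^p(T) = inf ‖(x'ₙ)‖^w_{p'} ⬝ (∑ₙ ‖yₙ‖^p)^{1/p}` over all representations of `T`. -/
def nuP (𝕜 : Type*) [RCLike 𝕜] {X Y : Type*}
    [SeminormedAddCommGroup X] [NormedSpace 𝕜 X]
    [NormedAddCommGroup Y] [NormedSpace 𝕜 Y] (p : ℝ≥0∞) (T : X →L[𝕜] Y) : ℝ :=
  sInf {c : ℝ | ∃ (x' : ℕ → (X →L[𝕜] 𝕜)) (y : ℕ → Y) (C : ℝ) (hy : Memℓp y p), 0 ≤ C ∧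
    WeakLpBound 𝕜 (conjExp p) x' C ∧
    (∀ x : X, HasSum (fun n => x' n x • y n) (T x)) ∧
    c = C * lpNorm p y hy}
lemma lpNorm_const_smul' {𝕜 : Type*} [RCLike 𝕜] {Y : Type*} [NormedAddCommGroup Y]
    [NormedSpace 𝕜 Y] (p : ℝ≥0∞) [Fact (1 ≤ p)] (c : 𝕜) (y : ℕ → Y) (hy : Memℓp y p) :
    lpNorm p (fun n => c • y n) (hy.const_smul c) = ‖c‖ * lpNorm p y hy := by
  have : (⟨fun n => c • y n, hy.const_smul c⟩ : lp (fun _ : ℕ => Y) p) =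
      c • (⟨y, hy⟩ : lp (fun _ : ℕ => Y) p) := rfl
  rw [lpNorm, this, norm_smul, lpNorm]

lemma norm_le_of_metric_surj {𝕜 : Type*} [RCLike 𝕜] {X Z : Type*}
    [NormedAddCommGroup X] [NormedSpace 𝕜 X]
    [NormedAddCommGroup Z] [NormedSpace 𝕜 Z]
    (Q : Z →L[𝕜] X) (hQ : Q '' Metric.ball 0 1 = Metric.ball 0 1)
    {z : Z} (hz : ‖z‖ ≤ 1) : ‖Q z‖ ≤ 1 := by
  refine le_of_forall_pos_le_add fun ε hε => ?_
  set c : 𝕜 := ((1 + ε : ℝ) : 𝕜) with hc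
  have h1 : (0:ℝ) < 1 + ε := by linarith
  have hcnorm : ‖c‖ = 1 + ε := by rw [hc, RCLike.norm_ofReal, abs_of_pos h1]
  have hc0 : c ≠ 0 := by
    simp only [hc, ne_eq, RCLike.ofReal_eq_zero]; linarith
  have hw : c⁻¹ • z ∈ Metric.ball (0:Z) 1 := by
    rw [mem_ball_zero_iff, norm_smul, norm_inv, hcnorm]
    calc (1+ε)⁻¹ * ‖z‖ ≤ (1+ε)⁻¹ * 1 := by
          apply mul_le_mul_of_nonneg_left hz (by positivity)
      _ < 1 := by
          rw [mul_one]
          exact inv_lt_one_of_one_lt₀ (by linarith)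
  have : Q (c⁻¹ • z) ∈ Metric.ball (0:X) 1 := hQ ▸ ⟨c⁻¹ • z, hw, rfl⟩
  rw [mem_ball_zero_iff, map_smul, norm_smul, norm_inv, hcnorm] at this
  have := (inv_mul_lt_iff₀ h1).mp this
  linarith

lemma pCo_smul_key {𝕜 : Type*} [RCLike 𝕜] {X Y Z : Type*}
    [NormedAddCommGroup X] [NormedSpace 𝕜 X]
    [NormedAddCommGroup Y] [NormedSpace 𝕜 Y]
    [NormedAddCommGroup Z] [NormedSpace 𝕜 Z]
    (Q : Z →L[𝕜] X) (hQ : Q '' Metric.ball 0 1 = Metric.ball 0 1)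
    (T : X →L[𝕜] Y) (q : ℝ≥0∞) (y : ℕ → Y)
    (hsub : (T.comp Q) '' Metric.closedBall 0 1 ⊆ pCo 𝕜 q y)
    (r : ℝ) (hr : 1 < r) :
    T '' Metric.closedBall 0 1 ⊆ pCo 𝕜 q (fun n => ((r:𝕜)) • y n) := by
  rintro _ ⟨x, hx, rfl⟩
  have hx' : ‖x‖ ≤ 1 := mem_closedBall_zero_iff.mp hx
  set c : 𝕜 := ((r : ℝ) : 𝕜) with hcdef
  have hr0 : (0:ℝ) < r := by linarith
  have hcnorm : ‖c‖ = r := by rw [hcdef, RCLike.norm_ofReal, abs_of_pos hr0]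
  have hc0 : c ≠ 0 := by simp only [hcdef, ne_eq, RCLike.ofReal_eq_zero]; linarith
  have hw : c⁻¹ • x ∈ Metric.ball (0:X) 1 := by
    rw [mem_ball_zero_iff, norm_smul, norm_inv, hcnorm]
    calc r⁻¹ * ‖x‖ ≤ r⁻¹ * 1 := by
          apply mul_le_mul_of_nonneg_left hx' (by positivity)
      _ < 1 := by rw [mul_one]; exact inv_lt_one_of_one_lt₀ hr
  rw [← hQ] at hw
  obtain ⟨z, hz, hQz⟩ := hw
  have hz' : z ∈ Metric.closedBall (0:Z) 1 := Metric.ball_subset_closedBall hz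
  obtain ⟨α, hα, hsum⟩ := hsub ⟨z, hz', rfl⟩
  refine ⟨α, hα, ?_⟩
  have h2 : (T.comp Q) z = c⁻¹ • T x := by
    rw [ContinuousLinearMap.comp_apply, hQz, map_smul]
  have h3 := hsum.const_smul c
  rw [h2, smul_smul, mul_inv_cancel₀ hc0, one_smul] at h3
  have h4 : (fun n => c • (α n • y n)) = fun n => α n • (c • y n) :=
    funext fun n => smul_comm _ _ _
  rwa [h4] at h3

/-- **Surjectivity of the ideal of `p`-compact maps.** If `Q : Z → X` is a metric surjection
and `T ∘ Q` is `p`-compact, then `T` is `p`-compact and `κ_p(T) = κ_p(T ∘ Q)`. -/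
theorem isPCompact_of_comp_metric_surjection {𝕜 X Y Z : Type*} [RCLike 𝕜]
    [NormedAddCommGroup X] [NormedSpace 𝕜 X] [CompleteSpace X]
    [NormedAddCommGroup Y] [NormedSpace 𝕜 Y] [CompleteSpace Y]
    [NormedAddCommGroup Z] [NormedSpace 𝕜 Z] [CompleteSpace Z]
    (p : ℝ≥0∞) (hp1 : 1 ≤ p) (hp : p ≠ ∞)
    (Q : Z →L[𝕜] X) (hQ : Q '' Metric.ball 0 1 = Metric.ball 0 1)
    (T : X →L[𝕜] Y) (h : IsPCompact 𝕜 p (T.comp Q)) :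
    IsPCompact 𝕜 p T ∧ kappa 𝕜 p T = kappa 𝕜 p (T.comp Q) := by
  haveI : Fact (1 ≤ p) := ⟨hp1⟩
  obtain ⟨y₀, hy₀, hsub₀⟩ := h
  -- T is p-compact (take r = 2)
  have hT : IsPCompact 𝕜 p T :=
    ⟨fun n => ((2:ℝ):𝕜) • y₀ n, hy₀.const_smul _,
      pCo_smul_key Q hQ T (conjExp p) y₀ hsub₀ 2 one_lt_two⟩
  refine ⟨hT, ?_⟩
  set S1 := {c : ℝ | ∃ (y : ℕ → Y) (hy : Memℓp y p),
    T '' Metric.closedBall 0 1 ⊆ pCo 𝕜 (conjExp p) y ∧ c = lpNorm p y hy} with hS1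
  set S2 := {c : ℝ | ∃ (y : ℕ → Y) (hy : Memℓp y p),
    (T.comp Q) '' Metric.closedBall 0 1 ⊆ pCo 𝕜 (conjExp p) y ∧ c = lpNorm p y hy} with hS2
  have hbdd1 : BddBelow S1 := ⟨0, by rintro c ⟨y, hy, -, rfl⟩; exact norm_nonneg _⟩
  have hbdd2 : BddBelow S2 := ⟨0, by rintro c ⟨y, hy, -, rfl⟩; exact norm_nonneg _⟩
  have hne1 : S1.Nonempty := by
    obtain ⟨y, hy, hsub⟩ := hT
    exact ⟨lpNorm p y hy, y, hy, hsub, rfl⟩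
  have hne2 : S2.Nonempty := ⟨lpNorm p y₀ hy₀, y₀, hy₀, hsub₀, rfl⟩
  -- S1 ⊆ S2 since Q maps closed ball into closed ball
  have hsub12 : S1 ⊆ S2 := by
    rintro c ⟨y, hy, hsub, rfl⟩
    refine ⟨y, hy, ?_, rfl⟩
    rintro _ ⟨z, hz, rfl⟩
    exact hsub ⟨Q z, mem_closedBall_zero_iff.mpr
      (norm_le_of_metric_surj Q hQ (mem_closedBall_zero_iff.mp hz)), rfl⟩
  have hle1 : sInf S2 ≤ sInf S1 := csInf_le_csInf hbdd2 hne1 hsub12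
  -- other direction
  have hle2 : sInf S1 ≤ sInf S2 := by
    refine le_of_forall_pos_le_add fun δ hδ => ?_
    obtain ⟨c, hcS2, hclt⟩ := Real.lt_sInf_add_pos hne2 (half_pos hδ)
    obtain ⟨y, hy, hsub, rfl⟩ := hcS2
    have hc0 : 0 ≤ lpNorm p y hy := norm_nonneg _
    set c := lpNorm p y hy
    set r : ℝ := 1 + δ / (2 * (c + 1)) with hrdef
    have hr1 : 1 < r := by
      rw [hrdef]
      have : 0 < δ / (2 * (c + 1)) := by positivity
      linarith
    have hmem : r * c ∈ S1 := by
      refine ⟨fun n => ((r:𝕜)) • y n, hy.const_smul _,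
        pCo_smul_key Q hQ T (conjExp p) y hsub r hr1, ?_⟩
      rw [lpNorm_const_smul' p _ y hy, RCLike.norm_ofReal, abs_of_pos (by linarith)]
    have h5 : sInf S1 ≤ r * c := csInf_le hbdd1 hmem
    have h6 : r * c ≤ c + δ / 2 := by
      rw [hrdef, add_mul, one_mul]
      have : δ / (2 * (c + 1)) * c ≤ δ / 2 := by
        rw [div_mul_eq_mul_div, div_le_div_iff₀ (by positivity) (by norm_num)]
        nlinarith
      linarith
    have h7 := h5.trans h6
    linarith
  exact le_antisymm hle2 hle1
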